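/- arXiv:1201.1166 — 2 statements merged into one kernel-verified Lean document; each statement's English description precedes it below -/
import Mathlib

section
/- For the stationary AR(1) process and any α > 0, n^{-(1+α/2)} Σ_{t=2}^n |X_{t-1}|^{2+α} → 0 in probability as n → ∞. -/
/-!
If every `|X t|` with `t ≤ n` is at most `ε √n`, then `∑ |X t| ^ (2 + α) ≤ (ε √n) ^ α ∑ (X t) ^ 2`,
so the normalised sum is at most `ε ^ α` times `n⁻¹ ∑ (X t) ^ 2`, whose mean is `ε ^ α 𝔼[X ^ 2]`;
Markov's inequality controls this part. The complementary event has probability at most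
`n ℙ(|X| > ε √n) ≤ ε⁻² 𝔼[X ^ 2; |X| > ε √n]`, which tends to `0`. Finally let `ε → 0`.
-/

open MeasureTheory ProbabilityTheory Filter Set
open scoped Topology

lemma sum_abs_rpow_two_add_le {ι : Type*} (s : Finset ι) (x : ι → ℝ) {M α : ℝ} (hα : 0 ≤ α)
    (hx : ∀ t ∈ s, |x t| ≤ M) :
    ∑ t ∈ s, |x t| ^ ((2:ℝ) + α) ≤ M ^ α * ∑ t ∈ s, x t ^ 2 := by
  rw [Finset.mul_sum]
  refine Finset.sum_le_sum fun t ht => ?_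
  calc |x t| ^ ((2:ℝ) + α) = |x t| ^ α * x t ^ 2 := by
        rw [Real.rpow_add' (abs_nonneg _) (by positivity), Real.rpow_two, sq_abs, mul_comm]
    _ ≤ M ^ α * x t ^ 2 := by gcongr; exact hx t ht

lemma inv_rpow_mul_sum_abs_rpow_le {ι : Type*} (s : Finset ι) (x : ι → ℝ) {n ε α : ℝ}
    (hn : 0 < n) (hε : 0 ≤ ε) (hα : 0 ≤ α) (hx : ∀ t ∈ s, |x t| ≤ ε * √n) :
    (n ^ ((1:ℝ) + α / 2))⁻¹ * ∑ t ∈ s, |x t| ^ ((2:ℝ) + α) ≤ ε ^ α * (∑ t ∈ s, x t ^ 2) / n := by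
  have hscale : (ε * √n) ^ α = ε ^ α * n ^ (α / 2) := by
    rw [Real.mul_rpow hε (Real.sqrt_nonneg _), Real.sqrt_eq_rpow, ← Real.rpow_mul hn.le]
    ring_nf
  have hsplit : n ^ ((1:ℝ) + α / 2) = n * n ^ (α / 2) := by
    rw [Real.rpow_add hn, Real.rpow_one]
  calc (n ^ ((1:ℝ) + α / 2))⁻¹ * ∑ t ∈ s, |x t| ^ ((2:ℝ) + α)
      ≤ (n ^ ((1:ℝ) + α / 2))⁻¹ * ((ε * √n) ^ α * ∑ t ∈ s, x t ^ 2) := by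
        gcongr
        exact sum_abs_rpow_two_add_le s x hα hx
    _ = ε ^ α * (∑ t ∈ s, x t ^ 2) / n := by
        rw [hscale, hsplit]
        field_simp

lemma tendsto_zero_of_forall_le_add {β : Type*} {l : Filter β} {f : β → ℝ} (g : ℝ → β → ℝ)
    (h : ℝ → ℝ) (hf : ∀ b, 0 ≤ f b) (hg : ∀ ε > 0, Tendsto (g ε) l (𝓝 0))
    (hh : Tendsto h (𝓝[>] 0) (𝓝 0)) (hfgh : ∀ ε > 0, ∀ᶠ b in l, f b ≤ g ε b + h ε) :
    Tendsto f l (𝓝 0) := by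
  refine tendsto_order.2 ⟨fun a ha => Eventually.of_forall fun b => ha.trans_le (hf b),
    fun a ha => ?_⟩
  obtain ⟨ε, hhε, hε⟩ :=
    ((hh.eventually (gt_mem_nhds (half_pos ha))).and self_mem_nhdsWithin).exists
  filter_upwards [hfgh ε hε, (hg ε hε).eventually (gt_mem_nhds (half_pos ha))] with b hb hgb
  linarith

section

variable {Ω : Type*} [MeasurableSpace Ω] {μ : Measure Ω}

lemma identDistrib_zero_of_map_fin_one_eq {X : ℕ → Ω → ℝ} (hX : ∀ t, Measurable (X t))
    (h : ∀ k : ℕ, Measure.map (fun ω (i : Fin 1) => X (i.1 + k) ω) μ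
      = Measure.map (fun ω (i : Fin 1) => X i.1 ω) μ) (k : ℕ) :
    IdentDistrib (X k) (X 0) μ μ := by
  have hvec : IdentDistrib (fun ω (i : Fin 1) => X (i.1 + k) ω) (fun ω (i : Fin 1) => X i.1 ω)
      μ μ :=
    ⟨(measurable_pi_lambda _ fun _ => hX _).aemeasurable,
      (measurable_pi_lambda _ fun _ => hX _).aemeasurable, h k⟩
  simpa [Function.comp_def] using hvec.comp (measurable_pi_apply 0)

variable {ι : Type*} {X : ι → Ω → ℝ} {Y : Ω → ℝ}

lemma measureReal_biUnion_lt_abs_le (hX : ∀ t, IdentDistrib (X t) Y μ μ) (s : Finset ι)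
    (c : ℝ) :
    μ.real (⋃ t ∈ s, {ω | c < |X t ω|}) ≤ s.card * μ.real {ω | c < |Y ω|} := by
  have hS : MeasurableSet {x : ℝ | c < |x|} := measurableSet_lt measurable_const measurable_abs
  calc μ.real (⋃ t ∈ s, {ω | c < |X t ω|}) ≤ ∑ t ∈ s, μ.real {ω | c < |X t ω|} :=
        measureReal_biUnion_finset_le _ _
    _ = ∑ t ∈ s, μ.real {ω | c < |Y ω|} := Finset.sum_congr rfl fun t _ => by
        simp only [measureReal_def]
        exact congrArg ENNReal.toReal ((hX t).measure_mem_eq hS)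
    _ = s.card * μ.real {ω | c < |Y ω|} := by rw [Finset.sum_const, nsmul_eq_mul]

variable [IsFiniteMeasure μ]

lemma tendsto_mul_measureReal_mul_sqrt_lt_abs (hY : Measurable Y)
    (hY2 : Integrable (fun ω => Y ω ^ 2) μ) {ε : ℝ} (hε : 0 < ε) :
    Tendsto (fun n : ℕ => n * μ.real {ω | ε * √n < |Y ω|}) atTop (𝓝 0) := by
  set s : ℕ → Set Ω := fun n => {ω | ε * √n < |Y ω|}
  have hs_meas : ∀ n, MeasurableSet (s n) := fun n =>
    measurableSet_lt measurable_const hY.abs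
  have hs_anti : Antitone s := fun m n hmn ω (hω : ε * √n < |Y ω|) =>
    show ε * √m < |Y ω| from lt_of_le_of_lt (by gcongr) hω
  have hs_empty : ⋂ n, s n = ∅ := by
    refine eq_empty_of_forall_notMem fun ω hω => ?_
    obtain ⟨n, hn⟩ := exists_nat_ge ((|Y ω| / ε) ^ 2)
    have hle : |Y ω| ≤ ε * √n := by
      rw [← div_le_iff₀' hε]
      exact Real.le_sqrt_of_sq_le hn
    exact (mem_iInter.1 hω n).not_ge hle
  have htail : Tendsto (fun n => ∫ ω in s n, Y ω ^ 2 ∂μ) atTop (𝓝 0) := by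
    simpa [hs_empty] using
      tendsto_setIntegral_of_antitone hs_meas hs_anti ⟨0, hY2.integrableOn⟩
  have hmarkov : ∀ n : ℕ, n * μ.real (s n) ≤ (ε ^ 2)⁻¹ * ∫ ω in s n, Y ω ^ 2 ∂μ := by
    intro n
    rw [le_inv_mul_iff₀ (by positivity), ← mul_assoc]
    refine setIntegral_ge_of_const_le_real (hs_meas n) (measure_ne_top _ _) (fun ω hω => ?_)
      hY2.integrableOn
    calc ε ^ 2 * n = (ε * √n) ^ 2 := by rw [mul_pow, Real.sq_sqrt n.cast_nonneg]
      _ ≤ |Y ω| ^ 2 := by gcongr; exact le_of_lt hω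
      _ = Y ω ^ 2 := sq_abs _
  exact squeeze_zero (fun n => by positivity) hmarkov (by simpa using htail.const_mul _)

lemma measureReal_lt_sum_sq_le (hX : ∀ t, IdentDistrib (X t) Y μ μ)
    (hY2 : Integrable (fun ω => Y ω ^ 2) μ) (s : Finset ι) {r : ℝ} (hr : 0 < r) :
    μ.real {ω | r < ∑ t ∈ s, X t ω ^ 2} ≤ s.card * (∫ ω, Y ω ^ 2 ∂μ) / r := by
  have hsq : ∀ t, IdentDistrib (fun ω => X t ω ^ 2) (fun ω => Y ω ^ 2) μ μ := fun t =>
    (hX t).comp (measurable_id.pow_const 2)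
  have hint : ∀ t, Integrable (fun ω => X t ω ^ 2) μ := fun t => (hsq t).integrable_iff.2 hY2
  have hmean : ∫ ω, ∑ t ∈ s, X t ω ^ 2 ∂μ = s.card * ∫ ω, Y ω ^ 2 ∂μ := by
    rw [integral_finsetSum _ fun t _ => hint t, Finset.sum_congr rfl fun t _ => (hsq t).integral_eq,
      Finset.sum_const, nsmul_eq_mul]
  rw [le_div_iff₀ hr, mul_comm, ← hmean]
  calc r * μ.real {ω | r < ∑ t ∈ s, X t ω ^ 2} ≤ r * μ.real {ω | r ≤ ∑ t ∈ s, X t ω ^ 2} :=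
        mul_le_mul_of_nonneg_left
          (measureReal_mono fun ω (hω : r < ∑ t ∈ s, X t ω ^ 2) => hω.le) hr.le
    _ ≤ ∫ ω, ∑ t ∈ s, X t ω ^ 2 ∂μ :=
        mul_meas_ge_le_integral_of_nonneg (Eventually.of_forall fun ω => by positivity)
          (integrable_finsetSum _ fun t _ => hint t) r

lemma measureReal_inv_rpow_mul_sum_abs_rpow_gt_le (hX : ∀ t, IdentDistrib (X t) Y μ μ)
    (hY2 : Integrable (fun ω => Y ω ^ 2) μ) {s : Finset ι} {n : ℕ} (hn : 0 < n)
    (hs : s.card ≤ n) {α ε e : ℝ} (hα : 0 ≤ α) (hε : 0 < ε) (he : 0 < e) :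
    μ.real {ω | e < ((n : ℝ) ^ ((1:ℝ) + α / 2))⁻¹ * ∑ t ∈ s, |X t ω| ^ ((2:ℝ) + α)} ≤
      n * μ.real {ω | ε * √n < |Y ω|} + ε ^ α * (∫ ω, Y ω ^ 2 ∂μ) / e := by
  have hn' : (0:ℝ) < n := by exact_mod_cast hn
  have hεα : 0 < ε ^ α := Real.rpow_pos_of_pos hε α
  have hcover : {ω | e < ((n : ℝ) ^ ((1:ℝ) + α / 2))⁻¹ * ∑ t ∈ s, |X t ω| ^ ((2:ℝ) + α)} ⊆
      (⋃ t ∈ s, {ω | ε * √n < |X t ω|}) ∪ {ω | e * n / ε ^ α < ∑ t ∈ s, X t ω ^ 2} := by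
    intro ω hω
    by_cases hlarge : ∃ t ∈ s, ε * √n < |X t ω|
    · obtain ⟨t, ht, hlt⟩ := hlarge
      exact Or.inl (mem_biUnion ht hlt)
    · push Not at hlarge
      have hsmall := lt_of_lt_of_le hω
        (inv_rpow_mul_sum_abs_rpow_le s (X · ω) hn' hε.le hα hlarge)
      rw [lt_div_iff₀ hn'] at hsmall
      exact Or.inr ((div_lt_iff₀' hεα).2 hsmall)
  calc _ ≤ μ.real ((⋃ t ∈ s, {ω | ε * √n < |X t ω|}) ∪
          {ω | e * n / ε ^ α < ∑ t ∈ s, X t ω ^ 2}) := measureReal_mono hcover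
    _ ≤ μ.real (⋃ t ∈ s, {ω | ε * √n < |X t ω|}) +
          μ.real {ω | e * n / ε ^ α < ∑ t ∈ s, X t ω ^ 2} := measureReal_union_le _ _
    _ ≤ n * μ.real {ω | ε * √n < |Y ω|} + n * (∫ ω, Y ω ^ 2 ∂μ) / (e * n / ε ^ α) := by
        gcongr
        · exact (measureReal_biUnion_lt_abs_le hX s _).trans (by gcongr)
        · exact (measureReal_lt_sum_sq_le hX hY2 s (by positivity)).trans (by gcongr)
    _ = n * μ.real {ω | ε * √n < |Y ω|} + ε ^ α * (∫ ω, Y ω ^ 2 ∂μ) / e := by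
        field_simp

theorem tendsto_measure_inv_rpow_mul_sum_abs_rpow_gt (hX : ∀ t, IdentDistrib (X t) Y μ μ)
    (hY : Measurable Y) (hY2 : Integrable (fun ω => Y ω ^ 2) μ) (s : ℕ → Finset ι)
    (hs : ∀ n, (s n).card ≤ n) {α : ℝ} (hα : 0 < α) {e : ℝ} (he : 0 < e) :
    Tendsto (fun n : ℕ => μ {ω | e < ((n : ℝ) ^ ((1:ℝ) + α / 2))⁻¹ *
      ∑ t ∈ s n, |X t ω| ^ ((2:ℝ) + α)}) atTop (𝓝 0) := by
  rw [← ENNReal.tendsto_toReal_iff (fun n => measure_ne_top _ _) ENNReal.zero_ne_top,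
    ENNReal.toReal_zero]
  refine tendsto_zero_of_forall_le_add (fun ε n => n * μ.real {ω | ε * √n < |Y ω|})
    (fun ε => ε ^ α * (∫ ω, Y ω ^ 2 ∂μ) / e) (fun n => ENNReal.toReal_nonneg)
    (fun ε hε => tendsto_mul_measureReal_mul_sqrt_lt_abs hY hY2 hε) ?_ fun ε hε => ?_
  · have hrpow : Tendsto (fun ε : ℝ => ε ^ α) (𝓝[>] 0) (𝓝 0) := by
      simpa [Real.zero_rpow hα.ne'] using
        (Real.continuousAt_rpow_const 0 α (Or.inr hα.le)).tendsto.mono_left nhdsWithin_le_nhds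
    simpa using (hrpow.mul_const _).div_const e
  · filter_upwards [eventually_gt_atTop 0] with n hn
    exact measureReal_inv_rpow_mul_sum_abs_rpow_gt_le hX hY2 hn (hs n) hα.le hε he

end

theorem power_sum_negligible_ar1_general
{Ω : Type*} [MeasurableSpace Ω] (P : Measure Ω) [IsProbabilityMeasure P]
    (X : ℕ → Ω → ℝ)
    (hXmeas : ∀ t, Measurable (X t))
    (hX2 : Integrable (fun ω => (X 1 ω) ^ 2) P)
    (hstat : ∀ m k : ℕ, Measure.map (fun ω (i : Fin m) => X (i.1 + k) ω) P
        = Measure.map (fun ω (i : Fin m) => X i.1 ω) P) :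
    ∀ α > (0:ℝ), ∀ e > (0:ℝ), Tendsto (fun n : ℕ =>
      P {ω | e < ((n : ℝ) ^ ((1:ℝ) + α / 2))⁻¹ *
          ∑ t ∈ Finset.Icc 2 n, |X (t - 1) ω| ^ ((2:ℝ) + α)})
      atTop (𝓝 0) := by
  intro α hα e he
  have hident : ∀ t, IdentDistrib (X t) (X 1) P P := fun t =>
    (identDistrib_zero_of_map_fin_one_eq hXmeas (hstat 1) t).trans
      (identDistrib_zero_of_map_fin_one_eq hXmeas (hstat 1) 1).symm
  exact tendsto_measure_inv_rpow_mul_sum_abs_rpow_gt (fun t => hident (t - 1)) (hXmeas 1) hX2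
    (fun n => Finset.Icc 2 n) (fun n => by simp only [Nat.card_Icc]; omega) hα he

/-- For the stationary AR(1) process and any α > 0,
n^{-(1+α/2)} Σ_{t=2}^n |X_{t-1}|^{2+α} → 0 in probability as n → ∞. -/
theorem power_sum_negligible_ar1
{Ω : Type*} [MeasurableSpace Ω] (P : Measure Ω) [IsProbabilityMeasure P]
    (X Z : ℕ → Ω → ℝ) (θ σ : ℝ)
    (hXmeas : ∀ t, Measurable (X t)) (hZmeas : ∀ t, Measurable (Z t))
    (hθ : |θ| < 1) (hσ : 0 < σ)
    (hAR : ∀ t ω, X (t + 1) ω = θ * X t ω + Z (t + 1) ω)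
    (hZindep : iIndepFun Z P)
    (hZident : ∀ t, Measure.map (Z t) P = Measure.map (Z 1) P)
    (hZmean : ∫ ω, Z 1 ω ∂P = 0)
    (hZ2 : Integrable (fun ω => (Z 1 ω) ^ 2) P)
    (hZvar : ∫ ω, (Z 1 ω) ^ 2 ∂P = σ ^ 2)
    (hX2 : Integrable (fun ω => (X 1 ω) ^ 2) P)
    (hstat : ∀ m k : ℕ, Measure.map (fun ω (i : Fin m) => X (i.1 + k) ω) P
        = Measure.map (fun ω (i : Fin m) => X i.1 ω) P) :
    ∀ α > (0:ℝ), ∀ e > (0:ℝ), Tendsto (fun n : ℕ =>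
      P {ω | e < ((n : ℝ) ^ ((1:ℝ) + α / 2))⁻¹ *
          ∑ t ∈ Finset.Icc 2 n, |X (t - 1) ω| ^ ((2:ℝ) + α)})
      atTop (𝓝 0) :=
  power_sum_negligible_ar1_general P X hXmeas hX2 hstat
end

section
/- Let (w_1,…,w_n) ~ Multinomial(n; 1/n,…,1/n) and W_t = √(n/(n−1))(w_t − 1). Then (1/n) Σ_{t=1}^n W_t² → 1 in probability as n → ∞. -/
open MeasureTheory ProbabilityTheory Filter Set
open scoped ENNReal NNReal Topology

/-!
Let `N` be the number of pairs `a < b` of draws that land in the same cell. On the almost sure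
event that every draw lands in `{0, …, n - 1}`, `∑ₜ (wₜ - 1)² = 2N`, so the statistic minus `1`
is `2 (N - 𝔼N) / (n - 1)`. The collision indicators `1{ξ_a = ξ_b}` have mean `1/n` and are
pairwise independent: for two distinct pairs `{k, m}` and `{c, d}` we may take `k ∉ {c, d}`, and
since `ξ_k` is uniform and independent of `(ξ_m, ξ_c, ξ_d)`, the event `{ξ_k = ξ_m}` is
independent of `(ξ_m, ξ_c, ξ_d)`. Hence `Var N ≤ (n - 1)/2`, and Chebyshev's inequality bounds
the probability of a deviation larger than `e` by `2 / (e² (n - 1))`.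
-/

namespace Finset

variable {ι κ : Type*} [DecidableEq κ]

lemma sum_sq_card_fiberwise_eq_card_filter_product {s : Finset ι} {t : Finset κ} {g : ι → κ}
    (hg : ∀ a ∈ s, g a ∈ t) :
    ∑ x ∈ t, #{a ∈ s | g a = x} ^ 2 = #{p ∈ s ×ˢ s | g p.1 = g p.2} := by
  rw [card_eq_sum_card_fiberwise (f := fun p => g p.1) (t := t)
    fun p hp => hg _ (mem_product.1 (mem_filter.1 hp).1).1]
  refine sum_congr rfl fun x _ => ?_
  rw [sq, ← card_product]
  congr 1
  ext p
  simp only [mem_product, mem_filter]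
  grind

lemma card_filter_product_eq_card_add_two_mul [LinearOrder ι] (s : Finset ι) {r : ι → ι → Prop}
    [DecidableRel r] (hrefl : ∀ a, r a a) (hsymm : ∀ a b, r a b → r b a) :
    #{p ∈ s ×ˢ s | r p.1 p.2} = #s + 2 * #{p ∈ s ×ˢ s | p.1 < p.2 ∧ r p.1 p.2} := by
  set u : Finset (ι × ι) := {p ∈ s ×ˢ s | p.1 < p.2 ∧ r p.1 p.2}
  set v : Finset (ι × ι) := {p ∈ s ×ˢ s | p.2 < p.1 ∧ r p.1 p.2}
  have hswap : #u = #v := card_equiv (Equiv.prodComm ι ι) (by grind)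
  have hsplit : {p ∈ s ×ˢ s | r p.1 p.2} = (s.diag ∪ u) ∪ v := by
    ext p
    simp only [mem_union, mem_diag, mem_filter, u, v, mem_product]
    grind
  rw [hsplit, card_union_of_disjoint (by grind [disjoint_left]),
    card_union_of_disjoint (by grind [disjoint_left]), diag_card, ← hswap]
  ring

lemma sum_sq_card_fiberwise_sub_one [LinearOrder ι] {s : Finset ι} {t : Finset κ} {g : ι → κ}
    (hg : ∀ a ∈ s, g a ∈ t) (hst : #s = #t) :
    ∑ x ∈ t, ((#{a ∈ s | g a = x} : ℝ) - 1) ^ 2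
      = (2 : ℝ) * #{p ∈ s ×ˢ s | p.1 < p.2 ∧ g p.1 = g p.2} := by
  have hsq : ∑ x ∈ t, (#{a ∈ s | g a = x} : ℝ) ^ 2
      = (#s : ℝ) + 2 * #{p ∈ s ×ˢ s | p.1 < p.2 ∧ g p.1 = g p.2} := by
    exact_mod_cast (sum_sq_card_fiberwise_eq_card_filter_product hg).trans
      (card_filter_product_eq_card_add_two_mul s (r := fun a b => g a = g b)
        (fun _ => rfl) (fun _ _ => Eq.symm))
  have hsum : ∑ x ∈ t, (#{a ∈ s | g a = x} : ℝ) = (#s : ℝ) := by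
    exact_mod_cast (card_eq_sum_card_fiberwise hg).symm
  simp only [sub_sq, mul_one, one_pow, sum_add_distrib, sum_sub_distrib, ← mul_sum, hsq, hsum,
    sum_const, nsmul_one, hst]
  ring

end Finset

noncomputable def meanSqStandardizedWeight (n : ℕ) (w : ℕ → ℝ) : ℝ :=
  1 / (n : ℝ) * ∑ t ∈ Finset.range n, (√((n : ℝ) / ((n : ℝ) - 1)) * (w t - 1)) ^ 2

lemma meanSqStandardizedWeight_eq {n : ℕ} (hn : 1 < n) (w : ℕ → ℝ) :
    meanSqStandardizedWeight n w = (∑ t ∈ Finset.range n, (w t - 1) ^ 2) / ((n : ℝ) - 1) := by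
  have hn1 : (1 : ℝ) < n := by exact_mod_cast hn
  have hsq : ∀ x : ℝ, (√((n : ℝ) / ((n : ℝ) - 1)) * x) ^ 2 = n / (n - 1) * x ^ 2 :=
    fun x => by rw [mul_pow, Real.sq_sqrt (div_nonneg (by linarith) (by linarith))]
  simp only [meanSqStandardizedWeight, hsq, ← Finset.mul_sum]
  field_simp

section UniformDraw

variable {Ω β : Type*} [MeasurableSpace Ω] [MeasurableSpace β] {P : Measure Ω} {n : ℕ}
  {X : Ω → ℕ} {Y : Ω → β} {g : β → ℕ}

lemma ae_lt_of_measure_eq_one_div [IsProbabilityMeasure P] (hX : Measurable X) (hn : 0 < n)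
    (hunif : ∀ i < n, P {ω | X ω = i} = 1 / n) : ∀ᵐ ω ∂P, X ω < n := by
  have hlt : {ω | X ω < n} = X ⁻¹' (Finset.range n) := by ext; simp
  rw [ae_iff_measure_eq (p := fun ω => X ω < n) (hX measurableSet_Iio).nullMeasurableSet,
    measure_univ, hlt, ← Measure.map_apply hX (Finset.measurableSet _), ← sum_measure_singleton,
    Finset.sum_congr rfl fun i hi => (Measure.map_apply hX (measurableSet_singleton i)).trans
      (hunif i (Finset.mem_range.1 hi)), Finset.sum_const, Finset.card_range, nsmul_eq_mul,
    one_div, ENNReal.mul_inv_cancel (by exact_mod_cast hn.ne') (ENNReal.natCast_ne_top n)]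

lemma measure_eq_comp_inter_preimage [IsFiniteMeasure P] (hX : Measurable X) (hY : Measurable Y)
    (hg : Measurable g) (hXY : IndepFun X Y P) (hunif : ∀ i < n, P {ω | X ω = i} = 1 / n)
    (hgY : ∀ᵐ ω ∂P, g (Y ω) < n) {s : Set β} (hs : MeasurableSet s) :
    P ({ω | X ω = g (Y ω)} ∩ Y ⁻¹' s) = 1 / n * P (Y ⁻¹' s) := by
  have hS : MeasurableSet {q : ℕ × β | q.1 = g q.2 ∧ q.2 ∈ s} :=
    (measurableSet_eq_fun measurable_fst (hg.comp measurable_snd)).inter (measurable_snd hs)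
  calc P ({ω | X ω = g (Y ω)} ∩ Y ⁻¹' s)
      = P.map (fun ω => (X ω, Y ω)) {q | q.1 = g q.2 ∧ q.2 ∈ s} := by
        rw [Measure.map_apply (hX.prodMk hY) hS]
        rfl
    _ = ∫⁻ y in s, P.map X {g y} ∂(P.map Y) := by
        rw [hXY.map_prod_eq_prod_map_map hX.aemeasurable hY.aemeasurable,
          Measure.prod_apply_symm hS, ← lintegral_indicator hs]
        congr with y
        by_cases hy : y ∈ s <;> simp [hy]
    _ = ∫⁻ _ in s, 1 / (n : ℝ≥0∞) ∂(P.map Y) := by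
        refine setLIntegral_congr_fun_ae hs ?_
        filter_upwards [(ae_map_iff hY.aemeasurable (hg measurableSet_Iio)).2 hgY] with y hy _
        rw [Measure.map_apply hX (measurableSet_singleton _)]
        exact hunif _ hy
    _ = 1 / n * P (Y ⁻¹' s) := by rw [setLIntegral_const, Measure.map_apply hY hs]

variable [IsProbabilityMeasure P]

lemma measure_eq_comp (hX : Measurable X) (hY : Measurable Y) (hg : Measurable g)
    (hXY : IndepFun X Y P) (hunif : ∀ i < n, P {ω | X ω = i} = 1 / n)
    (hgY : ∀ᵐ ω ∂P, g (Y ω) < n) : P {ω | X ω = g (Y ω)} = 1 / n := by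
  simpa using measure_eq_comp_inter_preimage hX hY hg hXY hunif hgY MeasurableSet.univ

lemma indepSet_eq_comp_preimage (hX : Measurable X) (hY : Measurable Y) (hg : Measurable g)
    (hXY : IndepFun X Y P) (hunif : ∀ i < n, P {ω | X ω = i} = 1 / n)
    (hgY : ∀ᵐ ω ∂P, g (Y ω) < n) {s : Set β} (hs : MeasurableSet s) :
    IndepSet {ω | X ω = g (Y ω)} (Y ⁻¹' s) P := by
  rw [indepSet_iff_measure_inter_eq_mul
    (measurableSet_eq_fun hX (hg.comp hY) : MeasurableSet {ω | X ω = g (Y ω)}) (hY hs) P,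
    measure_eq_comp_inter_preimage hX hY hg hXY hunif hgY hs,
    measure_eq_comp hX hY hg hXY hunif hgY]

end UniformDraw

section PairwiseIndicator

variable {Ω : Type*} [MeasurableSpace Ω] {P : Measure Ω}

lemma ProbabilityTheory.IndepSet.indepFun_indicator {A B : Set Ω} (h : IndepSet A B P) :
    IndepFun (A.indicator (1 : Ω → ℝ)) (B.indicator (1 : Ω → ℝ)) P :=
  Indep.indicator_indepFun 1 (MeasurableSpace.measurableSet_generateFrom (mem_singleton A)) <|
    indep_of_indep_of_le_right h <| Measurable.comap_le <|
      measurable_const.indicator (MeasurableSpace.measurableSet_generateFrom (mem_singleton B))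

lemma variance_sum_indicator_le [IsProbabilityMeasure P] {ι : Type*} (s : Finset ι)
    {A : ι → Set Ω} (hA : ∀ i, MeasurableSet (A i))
    (hindep : (s : Set ι).Pairwise fun i j => IndepSet (A i) (A j) P) :
    Var[∑ i ∈ s, (A i).indicator (1 : Ω → ℝ); P] ≤ ∑ i ∈ s, P.real (A i) := by
  have hmem : ∀ i ∈ s, MemLp ((A i).indicator (1 : Ω → ℝ)) 2 P :=
    fun i _ => memLp_indicator_const 2 (hA i) 1 (Or.inr (measure_ne_top P _))
  rw [IndepFun.variance_sum hmem (hindep.mono' fun i j h => h.indepFun_indicator)]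
  refine Finset.sum_le_sum fun i hi => (variance_le_expectation_sq (hmem i hi).1).trans_eq ?_
  have hsq : (A i).indicator (1 : Ω → ℝ) ^ 2 = (A i).indicator 1 := by
    ext ω
    by_cases h : ω ∈ A i <;> simp [h]
  rw [hsq, integral_indicator_one (hA i)]

end PairwiseIndicator

section Collision

open Finset

variable {Ω : Type*} {n : ℕ} {ξ : ℕ → Ω → ℕ}

noncomputable def collisionCount (ξ : ℕ → Ω → ℕ) (n : ℕ) : Ω → ℝ :=
  ∑ p ∈ range n ×ˢ range n with p.1 < p.2, {ω | ξ p.1 ω = ξ p.2 ω}.indicator 1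

lemma collisionCount_apply (ω : Ω) :
    collisionCount ξ n ω = #{p ∈ range n ×ˢ range n | p.1 < p.2 ∧ ξ p.1 ω = ξ p.2 ω} := by
  simp only [collisionCount, Finset.sum_apply, indicator_apply, mem_ofPred_eq, Pi.one_apply,
    sum_boole, filter_filter]

variable [MeasurableSpace Ω] {P : Measure Ω} [IsProbabilityMeasure P]

lemma memLp_collisionCount (hmeas : ∀ j, Measurable (ξ j)) : MemLp (collisionCount ξ n) 2 P :=
  memLp_finsetSum' _ fun _ _ => memLp_indicator_const 2
    (measurableSet_eq_fun (hmeas _) (hmeas _)) 1 (Or.inr (measure_ne_top P _))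

lemma ae_forall_lt_of_measure_eq_one_div (hmeas : ∀ j, Measurable (ξ j))
    (hunif : ∀ j < n, ∀ i < n, P {ω | ξ j ω = i} = 1 / n) : ∀ᵐ ω ∂P, ∀ j < n, ξ j ω < n := by
  have h := (eventually_all_finset (range n) (l := ae P)).2 fun j hj =>
    ae_lt_of_measure_eq_one_div (hmeas j) (Nat.zero_lt_of_lt (Finset.mem_range.1 hj))
      (hunif j (Finset.mem_range.1 hj))
  simpa only [Finset.mem_range] using h

lemma measure_collision (hmeas : ∀ j, Measurable (ξ j))
    (hunif : ∀ j < n, ∀ i < n, P {ω | ξ j ω = i} = 1 / n)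
    (hindep : iIndepFun (fun j : Fin n => ξ j) P) {a b : ℕ} (ha : a < n) (hb : b < n)
    (hab : a ≠ b) : P {ω | ξ a ω = ξ b ω} = 1 / n :=
  measure_eq_comp (g := id) (hmeas a) (hmeas b) measurable_id
    (hindep.indepFun (i := ⟨a, ha⟩) (j := ⟨b, hb⟩) (by simpa [Fin.ext_iff] using hab))
    (hunif a ha) (ae_lt_of_measure_eq_one_div (hmeas b) (by omega) (hunif b hb))

lemma indepSet_collision (hmeas : ∀ j, Measurable (ξ j))
    (hunif : ∀ j < n, ∀ i < n, P {ω | ξ j ω = i} = 1 / n)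
    (hindep : iIndepFun (fun j : Fin n => ξ j) P) {k m c d : ℕ} (hk : k < n) (hm : m < n)
    (hc : c < n) (hd : d < n) (hkm : k ≠ m) (hkc : k ≠ c) (hkd : k ≠ d) :
    IndepSet {ω | ξ k ω = ξ m ω} {ω | ξ c ω = ξ d ω} P := by
  set T : Finset (Fin n) := {⟨m, hm⟩, ⟨c, hc⟩, ⟨d, hd⟩}
  have hT : Disjoint {(⟨k, hk⟩ : Fin n)} T := by simp [T, Fin.ext_iff, hkm, hkc, hkd]
  have hkT : IndepFun (ξ k) (fun ω (j : T) => ξ j ω) P :=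
    (hindep.indepFun_finset _ T hT fun j => hmeas j).comp
      (measurable_pi_apply (⟨⟨k, hk⟩, mem_singleton_self _⟩ : ({⟨k, hk⟩} : Finset (Fin n))))
      measurable_id
  exact indepSet_eq_comp_preimage (Y := fun ω (j : T) => ξ j ω)
    (g := fun y => y ⟨⟨m, hm⟩, by simp [T]⟩) (hmeas k)
    (measurable_pi_lambda _ fun j => hmeas j) (measurable_pi_apply _) hkT (hunif k hk)
    (ae_lt_of_measure_eq_one_div (hmeas m) (by omega) (hunif m hm))
    (measurableSet_eq_fun (measurable_pi_apply ⟨⟨c, hc⟩, by simp [T]⟩)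
      (measurable_pi_apply ⟨⟨d, hd⟩, by simp [T]⟩))

lemma sum_measureReal_collision (hmeas : ∀ j, Measurable (ξ j))
    (hunif : ∀ j < n, ∀ i < n, P {ω | ξ j ω = i} = 1 / n)
    (hindep : iIndepFun (fun j : Fin n => ξ j) P) (hn : 0 < n) :
    ∑ p ∈ range n ×ˢ range n with p.1 < p.2, P.real {ω | ξ p.1 ω = ξ p.2 ω}
      = ((n : ℝ) - 1) / 2 := by
  have hterm : ∀ p ∈ (range n ×ˢ range n).filter (fun p => p.1 < p.2),
      P.real {ω | ξ p.1 ω = ξ p.2 ω} = 1 / n := by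
    intro p hp
    simp only [mem_filter, mem_product, Finset.mem_range] at hp
    rw [measureReal_def, measure_collision hmeas hunif hindep hp.1.1 hp.1.2 hp.2.ne, one_div,
      ENNReal.toReal_inv, ENNReal.toReal_natCast, one_div]
  have hn' : (n : ℝ) ≠ 0 := by positivity
  rw [sum_congr rfl hterm, sum_const, card_product_filter_lt, card_range, nsmul_eq_mul,
    Nat.cast_choose_two]
  field_simp

lemma integral_collisionCount (hmeas : ∀ j, Measurable (ξ j))
    (hunif : ∀ j < n, ∀ i < n, P {ω | ξ j ω = i} = 1 / n)
    (hindep : iIndepFun (fun j : Fin n => ξ j) P) (hn : 0 < n) :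
    P[collisionCount ξ n] = ((n : ℝ) - 1) / 2 := by
  simp only [collisionCount, Finset.sum_apply]
  rw [integral_finsetSum _ fun p _ => (integrable_const 1).indicator
    (measurableSet_eq_fun (hmeas _) (hmeas _))]
  simp only [integral_indicator_one (measurableSet_eq_fun (hmeas _) (hmeas _))]
  exact sum_measureReal_collision hmeas hunif hindep hn

lemma variance_collisionCount_le (hmeas : ∀ j, Measurable (ξ j))
    (hunif : ∀ j < n, ∀ i < n, P {ω | ξ j ω = i} = 1 / n)
    (hindep : iIndepFun (fun j : Fin n => ξ j) P) (hn : 0 < n) :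
    Var[collisionCount ξ n; P] ≤ ((n : ℝ) - 1) / 2 := by
  refine (variance_sum_indicator_le _ (fun p => measurableSet_eq_fun (hmeas _) (hmeas _)) ?_).trans
    (sum_measureReal_collision hmeas hunif hindep hn).le
  rintro ⟨a, b⟩ hp ⟨c, d⟩ hq hpq
  simp only [coe_filter, mem_product, Finset.mem_range, mem_ofPred_eq] at hp hq
  by_cases ha : a ≠ c ∧ a ≠ d
  · exact indepSet_collision hmeas hunif hindep (by omega) hp.1.2 hq.1.1 hq.1.2 hp.2.ne ha.1 ha.2
  · have hba : {ω | ξ a ω = ξ b ω} = {ω | ξ b ω = ξ a ω} := by ext; exact eq_comm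
    rw [hba]
    exact indepSet_collision hmeas hunif hindep hp.1.2 (by omega) hq.1.1 hq.1.2 hp.2.ne'
      (by grind) (by grind)

lemma ae_meanSqStandardizedWeight_sub_one_eq (hmeas : ∀ j, Measurable (ξ j))
    (hunif : ∀ j < n, ∀ i < n, P {ω | ξ j ω = i} = 1 / n)
    (hindep : iIndepFun (fun j : Fin n => ξ j) P) (hn : 1 < n) :
    ∀ᵐ ω ∂P, meanSqStandardizedWeight n (fun t => #{j ∈ range n | ξ j ω = t}) - 1
      = 2 / ((n : ℝ) - 1) * (collisionCount ξ n ω - P[collisionCount ξ n]) := by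
  have hn1 : (n : ℝ) - 1 ≠ 0 := by
    have : (1 : ℝ) < n := by exact_mod_cast hn
    linarith
  filter_upwards [ae_forall_lt_of_measure_eq_one_div hmeas hunif] with ω hω
  rw [meanSqStandardizedWeight_eq hn, sum_sq_card_fiberwise_sub_one
    (fun j hj => Finset.mem_range.2 (hω j (Finset.mem_range.1 hj))) rfl, ← collisionCount_apply,
    integral_collisionCount hmeas hunif hindep (by omega)]
  field_simp

lemma measure_lt_abs_meanSqStandardizedWeight_sub_one_le (hmeas : ∀ j, Measurable (ξ j))
    (hunif : ∀ j < n, ∀ i < n, P {ω | ξ j ω = i} = 1 / n)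
    (hindep : iIndepFun (fun j : Fin n => ξ j) P) (hn : 2 ≤ n) {e : ℝ} (he : 0 < e) :
    P {ω | e < |meanSqStandardizedWeight n (fun t => #{j ∈ range n | ξ j ω = t}) - 1|}
      ≤ ENNReal.ofReal (2 / (e ^ 2 * ((n : ℝ) - 1))) := by
  have hn1 : (0 : ℝ) < n - 1 := by
    have : (2 : ℝ) ≤ n := by exact_mod_cast hn
    linarith
  set N : Ω → ℝ := collisionCount ξ n
  set c := e * ((n : ℝ) - 1) / 2 with hc
  calc P {ω | e < |meanSqStandardizedWeight n (fun t => #{j ∈ range n | ξ j ω = t}) - 1|}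
      ≤ P {ω | c ≤ |N ω - P[N]|} := by
        refine measure_mono_ae <| (ae_meanSqStandardizedWeight_sub_one_eq hmeas hunif hindep
          (by omega)).mono fun ω hω (hlt : e < |_|) => ?_
        rw [hω, abs_mul, abs_of_pos (by positivity), div_mul_eq_mul_div, lt_div_iff₀ hn1] at hlt
        show c ≤ |N ω - P[N]|
        linarith
    _ ≤ ENNReal.ofReal (Var[N; P] / c ^ 2) :=
        meas_ge_le_variance_div_sq (memLp_collisionCount hmeas) (by positivity)
    _ ≤ ENNReal.ofReal (2 / (e ^ 2 * ((n : ℝ) - 1))) := by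
        refine ENNReal.ofReal_le_ofReal ?_
        rw [div_le_div_iff₀ (by positivity) (by positivity)]
        calc Var[N; P] * (e ^ 2 * ((n : ℝ) - 1)) ≤ ((n - 1) / 2) * (e ^ 2 * ((n : ℝ) - 1)) := by
              gcongr
              exact variance_collisionCount_le hmeas hunif hindep (by omega)
          _ = 2 * c ^ 2 := by ring

end Collision

/-- For multinomial weights (w₁,…,wₙ) ~ Mult(n; 1/n,…,1/n) (realized as cell
counts of n i.i.d. uniform draws ξ over n cells) and Wₜ = √(n/(n−1))(wₜ − 1),
one has (1/n) Σₜ Wₜ² → 1 in probability. -/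
theorem multinomial_weights_lln
    {Ω : Type*} [MeasurableSpace Ω] (P : Measure Ω) [IsProbabilityMeasure P]
    (ξ : ℕ → ℕ → Ω → ℕ)
    (hmeas : ∀ n j, Measurable (ξ n j))
    (hunif : ∀ n : ℕ, 0 < n → ∀ j ∈ Finset.range n, ∀ i ∈ Finset.range n,
      P {ω | ξ n j ω = i} = 1 / (n : ℝ≥0∞))
    (hindep : ∀ n : ℕ, iIndepFun
      (fun j : Fin n => ξ n j.1) P)
    (w : ℕ → ℕ → Ω → ℕ)
    (hw : ∀ n t ω, w n t ω = (Finset.filter (fun j => ξ n j ω = t) (Finset.range n)).card) :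
    ∀ e > (0:ℝ), Tendsto (fun n : ℕ =>
      P {ω | e < |(1 / (n : ℝ)) * (∑ t ∈ Finset.range n,
          (Real.sqrt ((n : ℝ) / ((n : ℝ) - 1)) * ((w n t ω : ℝ) - 1)) ^ 2) - 1|})
      atTop (𝓝 0) := by
  intro e he
  have hlim : Tendsto (fun n : ℕ => 2 / (e ^ 2 * ((n : ℝ) - 1))) atTop (𝓝 0) :=
    tendsto_const_nhds.div_atTop <| Tendsto.const_mul_atTop (by positivity) <|
      (tendsto_atTop_add_const_right atTop (-1) tendsto_natCast_atTop_atTop).congr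
        fun n => (sub_eq_add_neg _ _).symm
  refine tendsto_of_tendsto_of_tendsto_of_le_of_le' tendsto_const_nhds
    (ENNReal.ofReal_zero ▸ ENNReal.tendsto_ofReal hlim) (Eventually.of_forall fun _ => zero_le) ?_
  filter_upwards [eventually_ge_atTop 2] with n hn
  simp only [hw]
  exact measure_lt_abs_meanSqStandardizedWeight_sub_one_le (hmeas n) (fun j hj i hi =>
    hunif n (by omega) j (Finset.mem_range.2 hj) i (Finset.mem_range.2 hi)) (hindep n) hn he
end
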